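/- Let θ be a real random variable with distribution p(θ), and define the single-qubit channel E(ρ) = E_θ[ U_θ ρ U_θ† ] with U_θ = exp(iθX), where X is the Pauli X matrix. Let Δ = E[cos²θ − sin²θ] and t = E[cosθ sinθ], and assume Δ² + 4t² ≤ 1. Then there exists an angle φ and p̃ = (1 − √(Δ² + 4t²))/2 ∈ [0, 1/2] such that E = U_φ ∘ E_bitflip(p̃), where U_φ(ρ) = e^{iφX} ρ e^{−iφX} and E_bitflip(p̃)(ρ) = (1−p̃)ρ + p̃ XρX. -/

import Mathlib

/-!
Conjugation by `U_θ` acts on `ρ` as `(1 + Re z)/2 · ρ + (1 - Re z)/2 · XρX + (Im z)/2 · i[X, ρ]`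
with `z = e^{2iθ}`. This expression is affine in `z`, so averaging over `θ` gives the same map
with `z = E[e^{2iθ}] = Δ + 2it`, and composing two such maps multiplies their parameters.
The polar decomposition `z = e^{2iφ} · |z|` therefore splits the averaged channel into the
rotation `U_φ` after the map with real parameter `|z|`, which is the bit flip with
`p̃ = (1 - |z|)/2`.
-/

open Matrix MeasureTheory

/-- The Pauli `X` matrix. -/
noncomputable def pauliX : Matrix (Fin 2) (Fin 2) ℂ := !![0, 1; 1, 0]

/-- The rotation `U_θ = exp(iθX) = cos θ · I + i sin θ · X`. -/
noncomputable def Urot (θ : ℝ) : Matrix (Fin 2) (Fin 2) ℂ :=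
  ((Real.cos θ : ℂ)) • (1 : Matrix (Fin 2) (Fin 2) ℂ) +
    (Complex.I * (Real.sin θ : ℂ)) • pauliX

open Complex

lemma pauliX_conjTranspose : pauliXᴴ = pauliX := by
  ext i j; fin_cases i <;> fin_cases j <;> simp [pauliX]

lemma pauliX_mul_self : pauliX * pauliX = 1 := by
  ext i j; fin_cases i <;> fin_cases j <;> simp [pauliX, Matrix.mul_apply]

lemma pauliX_mul_pauliX_mul (A : Matrix (Fin 2) (Fin 2) ℂ) : pauliX * (pauliX * A) = A := by
  rw [← Matrix.mul_assoc, pauliX_mul_self, Matrix.one_mul]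

noncomputable def pauliXChannel (z : ℂ) (ρ : Matrix (Fin 2) (Fin 2) ℂ) :
    Matrix (Fin 2) (Fin 2) ℂ :=
  ((1 + z.re) / 2 : ℂ) • ρ + ((1 - z.re) / 2 : ℂ) • (pauliX * ρ * pauliX)
    + (z.im / 2 : ℂ) • (I • (pauliX * ρ - ρ * pauliX))

lemma pauliXChannel_mul (z w : ℂ) (ρ : Matrix (Fin 2) (Fin 2) ℂ) :
    pauliXChannel z (pauliXChannel w ρ) = pauliXChannel (z * w) ρ := by
  simp only [pauliXChannel, Matrix.mul_add, Matrix.add_mul, Matrix.mul_sub, Matrix.sub_mul,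
    Matrix.mul_smul, Matrix.smul_mul, Matrix.mul_assoc, pauliX_mul_pauliX_mul, pauliX_mul_self,
    Matrix.mul_one, mul_re, mul_im]
  match_scalars
  · linear_combination (z.im * w.im / 2 : ℂ) * I_sq
  · linear_combination (-(z.im * w.im) / 2 : ℂ) * I_sq
  · ring
  · ring

lemma pauliXChannel_one_sub_two_mul (p : ℝ) (ρ : Matrix (Fin 2) (Fin 2) ℂ) :
    pauliXChannel ((1 - 2 * p : ℝ) : ℂ) ρ =
      ((1 - p : ℝ) : ℂ) • ρ + ((p : ℝ) : ℂ) • (pauliX * ρ * pauliX) := by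
  simp only [pauliXChannel, ofReal_re, ofReal_im]
  match_scalars <;> ring

lemma Urot_conjTranspose (θ : ℝ) :
    (Urot θ)ᴴ = (Real.cos θ : ℂ) • (1 : Matrix (Fin 2) (Fin 2) ℂ) - (I * Real.sin θ) • pauliX := by
  rw [Urot, conjTranspose_add, conjTranspose_smul, conjTranspose_smul, conjTranspose_one,
    pauliX_conjTranspose, star_mul', star_def, conj_ofReal, conj_ofReal,
    conj_I, neg_mul, neg_smul, sub_eq_add_neg]

lemma Urot_mul_mul_conjTranspose (θ : ℝ) (ρ : Matrix (Fin 2) (Fin 2) ℂ) :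
    Urot θ * ρ * (Urot θ)ᴴ = pauliXChannel (exp ((2 * θ : ℝ) * I)) ρ := by
  rw [Urot_conjTranspose, Urot, pauliXChannel, exp_ofReal_mul_I_re, exp_ofReal_mul_I_im,
    Real.cos_two_mul', Real.sin_two_mul]
  simp only [Matrix.add_mul, Matrix.mul_sub, Matrix.mul_smul, Matrix.smul_mul, Matrix.mul_one,
    Matrix.one_mul]
  have hpyth := sin_sq_add_cos_sq (θ : ℂ)
  match_scalars
  · linear_combination (1 / 2 : ℂ) * hpyth
  · ring
  · ring
  · linear_combination (-sin (θ : ℂ) ^ 2) * I_sq + (1 / 2 : ℂ) * hpyth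

lemma integral_pauliXChannel {Ω : Type*} [MeasurableSpace Ω] (μ : Measure Ω)
    [IsProbabilityMeasure μ] {f : Ω → ℂ} (hf : Integrable f μ) (ρ : Matrix (Fin 2) (Fin 2) ℂ) :
    (fun i j => ∫ ω, pauliXChannel (f ω) ρ i j ∂μ) = pauliXChannel (∫ ω, f ω ∂μ) ρ := by
  ext i j
  set α := (ρ i j + (pauliX * ρ * pauliX) i j) / 2
  set β := (ρ i j - (pauliX * ρ * pauliX) i j) / 2
  set γ := (I • (pauliX * ρ - ρ * pauliX)) i j / 2
  have hentry (z : ℂ) : pauliXChannel z ρ i j = α + (z.re : ℂ) * β + (z.im : ℂ) * γ := by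
    simp only [pauliXChannel, Matrix.add_apply, Matrix.smul_apply, smul_eq_mul, α, β, γ]
    ring
  have hre : ∫ ω, ((f ω).re : ℂ) ∂μ = (∫ ω, f ω ∂μ).re := by
    rw [integral_complex_ofReal]; exact congrArg _ (integral_re hf)
  have him : ∫ ω, ((f ω).im : ℂ) ∂μ = (∫ ω, f ω ∂μ).im := by
    rw [integral_complex_ofReal]; exact congrArg _ (integral_im hf)
  have hre_int : Integrable (fun ω => ((f ω).re : ℂ) * β) μ := hf.re.ofReal.mul_const β
  have him_int : Integrable (fun ω => ((f ω).im : ℂ) * γ) μ := hf.im.ofReal.mul_const γ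
  have hlin_int : Integrable (fun ω => α + ((f ω).re : ℂ) * β) μ :=
    (integrable_const α).add hre_int
  simp_rw [hentry]
  rw [integral_add hlin_int him_int,
    integral_add (integrable_const α) hre_int, integral_const, integral_mul_const,
    integral_mul_const, hre, him, probReal_univ, one_smul]

lemma integrable_exp_ofReal_mul_I {α : Type*} [MeasurableSpace α] (μ : Measure α)
    [IsFiniteMeasure μ] {g : α → ℝ} (hg : Measurable g) : Integrable (fun x => exp (g x * I)) μ :=
  Integrable.of_bound (by fun_prop) 1 (.of_forall fun x => (norm_exp_ofReal_mul_I (g x)).le)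

lemma integral_exp_two_mul_I (μ : Measure ℝ) [IsFiniteMeasure μ] :
    ∫ θ, exp ((2 * θ : ℝ) * I) ∂μ =
      ⟨∫ θ, (Real.cos θ ^ 2 - Real.sin θ ^ 2) ∂μ, 2 * ∫ θ, Real.cos θ * Real.sin θ ∂μ⟩ := by
  have hint := integrable_exp_ofReal_mul_I μ (g := fun θ => 2 * θ) (by fun_prop)
  apply Complex.ext
  · rw [← RCLike.re_to_complex, ← integral_re hint]
    simp only [RCLike.re_to_complex, exp_ofReal_mul_I_re, Real.cos_two_mul']
  · rw [← RCLike.im_to_complex, ← integral_im hint, ← integral_const_mul]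
    simp only [RCLike.im_to_complex, exp_ofReal_mul_I_im, Real.sin_two_mul, mul_assoc,
      mul_comm (Real.sin _)]

theorem averaged_rotation_eq_rotation_comp_bitflip_general
    (μ : Measure ℝ) [IsProbabilityMeasure μ]
    (Δ t : ℝ)
    (hΔ : Δ = ∫ θ, (Real.cos θ ^ 2 - Real.sin θ ^ 2) ∂μ)
    (ht : t = ∫ θ, (Real.cos θ * Real.sin θ) ∂μ) :
    ∃ φ : ℝ, ∀ ρ : Matrix (Fin 2) (Fin 2) ℂ,
      (fun i j => ∫ θ, (Urot θ * ρ * (Urot θ)ᴴ) i j ∂μ) =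
        Urot φ *
          (((1 - (1 - Real.sqrt (Δ ^ 2 + 4 * t ^ 2)) / 2 : ℝ) : ℂ) • ρ +
            (((1 - Real.sqrt (Δ ^ 2 + 4 * t ^ 2)) / 2 : ℝ) : ℂ) • (pauliX * ρ * pauliX)) *
          (Urot φ)ᴴ := by
  set z : ℂ := ∫ θ, exp ((2 * θ : ℝ) * I) ∂μ
  have hz : z = ⟨Δ, 2 * t⟩ := by rw [hΔ, ht]; exact integral_exp_two_mul_I μ
  have hnorm : ‖z‖ = √(Δ ^ 2 + 4 * t ^ 2) := by
    rw [Complex.norm_def, normSq_apply, hz]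
    ring_nf
  refine ⟨arg z / 2, fun ρ => ?_⟩
  simp_rw [Urot_mul_mul_conjTranspose]
  rw [integral_pauliXChannel μ (integrable_exp_ofReal_mul_I μ (by fun_prop)),
    ← pauliXChannel_one_sub_two_mul, pauliXChannel_mul, ← hnorm]
  congr 1
  rw [show 2 * (z.arg / 2) = z.arg by ring, show 1 - 2 * ((1 - ‖z‖) / 2) = ‖z‖ by ring,
    mul_comm, norm_mul_exp_arg_mul_I]

/-- Proposition 3 (single-qubit core): the averaged coherent rotation channel
`ρ ↦ E_θ[U_θ ρ U_θᴴ]` equals a deterministic rotation `U_φ` composed with a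
bit-flip channel of strength `p̃ = (1 - √(Δ² + 4t²))/2`. -/
theorem averaged_rotation_eq_rotation_comp_bitflip
    (μ : Measure ℝ) [IsProbabilityMeasure μ]
    (Δ t : ℝ)
    (hΔ : Δ = ∫ θ, (Real.cos θ ^ 2 - Real.sin θ ^ 2) ∂μ)
    (ht : t = ∫ θ, (Real.cos θ * Real.sin θ) ∂μ)
    (hle : Δ ^ 2 + 4 * t ^ 2 ≤ 1) :
    ∃ φ : ℝ, ∀ ρ : Matrix (Fin 2) (Fin 2) ℂ,
      (fun i j => ∫ θ, (Urot θ * ρ * (Urot θ)ᴴ) i j ∂μ) =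
        Urot φ *
          (((1 - (1 - Real.sqrt (Δ ^ 2 + 4 * t ^ 2)) / 2 : ℝ) : ℂ) • ρ +
            (((1 - Real.sqrt (Δ ^ 2 + 4 * t ^ 2)) / 2 : ℝ) : ℂ) • (pauliX * ρ * pauliX)) *
          (Urot φ)ᴴ :=
  averaged_rotation_eq_rotation_comp_bitflip_general μ Δ t hΔ ht
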